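/- arXiv:1708.07381 — 3 statements merged into one kernel-verified Lean document; each statement's English description precedes it below -/
import Mathlib

section
/- Let (X, dist) be a metric space, let N be a finite nonempty set of points of X, let s, l ∈ X, and let c* be any element of N. Then ∑_{c∈N} dist(c,l)² ≤ 3·∑_{c∈N} dist(c,s)² + 3·|N|·(dist(c*,s)² + dist(c*,l)²). -/
open Finset

theorem add_add_sq_le_three_mul (a b c : ℝ) : (a + b + c) ^ 2 ≤ 3 * (a ^ 2 + b ^ 2 + c ^ 2) := by
  nlinarith [sq_nonneg (a - b), sq_nonneg (b - c), sq_nonneg (a - c)]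

theorem dist_sq_le_three_mul_dist_sq_add {X : Type*} [PseudoMetricSpace X] (x y z w : X) :
    dist x w ^ 2 ≤ 3 * (dist x y ^ 2 + dist y z ^ 2 + dist z w ^ 2) :=
  (pow_le_pow_left₀ dist_nonneg (dist_triangle4 x y z w) 2).trans (add_add_sq_le_three_mul _ _ _)

theorem stmt_0_general {X : Type*} [MetricSpace X] (N : Finset X) (s l cstar : X) :
    ∑ c ∈ N, dist c l ^ 2 ≤
      3 * ∑ c ∈ N, dist c s ^ 2 +
        3 * (N.card : ℝ) * (dist cstar s ^ 2 + dist cstar l ^ 2) := by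
  have reroute (c : X) :
      dist c l ^ 2 ≤ 3 * dist c s ^ 2 + 3 * (dist cstar s ^ 2 + dist cstar l ^ 2) := by
    have := dist_sq_le_three_mul_dist_sq_add c s cstar l
    rw [dist_comm s cstar] at this
    linarith
  calc ∑ c ∈ N, dist c l ^ 2
      ≤ ∑ c ∈ N, (3 * dist c s ^ 2 + 3 * (dist cstar s ^ 2 + dist cstar l ^ 2)) :=
        sum_le_sum fun c _ => reroute c
    _ = 3 * ∑ c ∈ N, dist c s ^ 2 +
        3 * (N.card : ℝ) * (dist cstar s ^ 2 + dist cstar l ^ 2) := by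
        rw [sum_add_distrib, sum_const, ← mul_sum, nsmul_eq_mul]
        ring

/-- Per-facility reassignment bound: the cost of rerouting all clients of `N`
to `l` is controlled by their cost at `s` plus `|N|` times the combined
squared distance of a witness client `cstar ∈ N` to `s` and to `l`. -/
theorem stmt_0 {X : Type*} [MetricSpace X] (N : Finset X) (s l cstar : X)
    (hstar : cstar ∈ N) :
    ∑ c ∈ N, dist c l ^ 2 ≤
      3 * ∑ c ∈ N, dist c s ^ 2 +
        3 * (N.card : ℝ) * (dist cstar s ^ 2 + dist cstar l ^ 2) :=
  stmt_0_general N s l cstar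
end

section
/- Let (X, dist) be a metric space, let f₀, ℓ₀ ∈ X, let V and W be finite sets of points of X with V ∩ W nonempty, and let ε > 0. Then ∑_{c ∈ V \ W} dist(c, ℓ₀)² ≤ (1+ε)² · ∑_{c ∈ V \ W} dist(c, f₀)² + (1+ε⁻¹)² · (|V \ W| / |V ∩ W|) · 3 · ∑_{c₁ ∈ V ∩ W} (dist(c₁, f₀)² + dist(c₁, ℓ₀)²). -/
/-!
Each client `c ∈ V \ W` is rerouted through `f₀`: the relaxed triangle inequality
`(a + b)² ≤ (1 + ε) a² + (1 + ε⁻¹) b²` bounds `dist(c, ℓ₀)²` by `dist(c, f₀)²` plus `dist(f₀, ℓ₀)²`,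
and `dist(f₀, ℓ₀)²` is at most the average over `c₁ ∈ V ∩ W` of `2 (dist(c₁, f₀)² + dist(c₁, ℓ₀)²)`,
since every such `c₁` is a detour from `f₀` to `ℓ₀`.
-/

open Finset

theorem add_sq_le_one_add_mul_sq_add_one_add_inv_mul_sq {ε : ℝ} (hε : 0 < ε) (a b : ℝ) :
    (a + b) ^ 2 ≤ (1 + ε) * a ^ 2 + (1 + ε⁻¹) * b ^ 2 := by
  have hcross : 2 * a * b ≤ ε * a ^ 2 + ε⁻¹ * b ^ 2 := by
    have hsq : ε * a ^ 2 + ε⁻¹ * b ^ 2 - 2 * a * b = ε⁻¹ * (ε * a - b) ^ 2 := by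
      field_simp
      ring
    nlinarith [mul_nonneg (inv_nonneg.mpr hε.le) (sq_nonneg (ε * a - b))]
  nlinarith

section PseudoMetric

variable {X : Type*} [PseudoMetricSpace X]

theorem dist_sq_le_relaxed_triangle {ε : ℝ} (hε : 0 < ε) (x y z : X) :
    dist x z ^ 2 ≤ (1 + ε) ^ 2 * dist x y ^ 2 + (1 + ε⁻¹) ^ 2 * dist y z ^ 2 := by
  calc dist x z ^ 2 ≤ (dist x y + dist y z) ^ 2 := by
        gcongr
        exact dist_triangle x y z
    _ ≤ (1 + ε) * dist x y ^ 2 + (1 + ε⁻¹) * dist y z ^ 2 :=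
        add_sq_le_one_add_mul_sq_add_one_add_inv_mul_sq hε _ _
    _ ≤ (1 + ε) ^ 2 * dist x y ^ 2 + (1 + ε⁻¹) ^ 2 * dist y z ^ 2 := by
        have hε' : 0 < ε⁻¹ := inv_pos.mpr hε
        gcongr <;> nlinarith

theorem dist_sq_le_two_mul_add (x y z : X) :
    dist x y ^ 2 ≤ 2 * (dist z x ^ 2 + dist z y ^ 2) := by
  have h := dist_triangle_left x y z
  nlinarith [dist_nonneg (x := x) (y := y), sq_nonneg (dist z x - dist z y)]

theorem dist_sq_le_two_div_card_mul_sum {s : Finset X} (hs : s.Nonempty) (x y : X) :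
    dist x y ^ 2 ≤ 2 / #s * ∑ z ∈ s, (dist z x ^ 2 + dist z y ^ 2) := by
  have hcard : (0 : ℝ) < #s := by exact_mod_cast hs.card_pos
  have hsum : #s * dist x y ^ 2 ≤ 2 * ∑ z ∈ s, (dist z x ^ 2 + dist z y ^ 2) := by
    simpa only [sum_const, nsmul_eq_mul, mul_sum] using
      sum_le_sum fun z _ => dist_sq_le_two_mul_add x y z
  rw [div_mul_eq_mul_div, le_div_iff₀ hcard]
  linarith

end PseudoMetric

/-- Main displayed inequality in the lemma on 1-1 isolated pairs: the cost of
rerouting the clients of `V \ W` from `f₀` to `ℓ₀` is bounded via the relaxed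
triangle inequality and averaging over `V ∩ W`. -/
theorem stmt_5 {X : Type*} [MetricSpace X] [DecidableEq X]
    (V W : Finset X) (hVW : (V ∩ W).Nonempty) (f₀ ℓ₀ : X)
    (ε : ℝ) (hε : 0 < ε) :
    ∑ c ∈ V \ W, dist c ℓ₀ ^ 2 ≤
      (1 + ε) ^ 2 * ∑ c ∈ V \ W, dist c f₀ ^ 2 +
        (1 + ε⁻¹) ^ 2 * (((V \ W).card : ℝ) / ((V ∩ W).card : ℝ)) * 3 *
          ∑ c₁ ∈ V ∩ W, (dist c₁ f₀ ^ 2 + dist c₁ ℓ₀ ^ 2) := by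
  set S := ∑ c₁ ∈ V ∩ W, (dist c₁ f₀ ^ 2 + dist c₁ ℓ₀ ^ 2)
  have hS : 0 ≤ S := sum_nonneg fun _ _ => by positivity
  have havg : dist f₀ ℓ₀ ^ 2 ≤ 3 / #(V ∩ W) * S :=
    (dist_sq_le_two_div_card_mul_sum hVW f₀ ℓ₀).trans (by gcongr; norm_num)
  calc ∑ c ∈ V \ W, dist c ℓ₀ ^ 2
      ≤ ∑ c ∈ V \ W, ((1 + ε) ^ 2 * dist c f₀ ^ 2 + (1 + ε⁻¹) ^ 2 * dist f₀ ℓ₀ ^ 2) :=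
        sum_le_sum fun c _ => dist_sq_le_relaxed_triangle hε c f₀ ℓ₀
    _ = (1 + ε) ^ 2 * ∑ c ∈ V \ W, dist c f₀ ^ 2 +
          (1 + ε⁻¹) ^ 2 * #(V \ W) * dist f₀ ℓ₀ ^ 2 := by
        rw [sum_add_distrib, mul_sum, sum_const, nsmul_eq_mul]
        ring
    _ ≤ (1 + ε) ^ 2 * ∑ c ∈ V \ W, dist c f₀ ^ 2 +
          (1 + ε⁻¹) ^ 2 * #(V \ W) * (3 / #(V ∩ W) * S) := by gcongr
    _ = _ := by ring
end

section
/- Let L > 0 be a real number, m ∈ ℕ, 0 ≤ γ ≤ 1/2, and p ∈ ℝ. For each integer 0 ≤ i ≤ m, say that a shift a ∈ ℝ puts p in the level-i moat if there exists j ∈ ℤ with |p − (a + j·L/2^i)| < γ·L/2^i, i.e., p is at distance less than γ·L/2^i from the shifted grid a + (L/2^i)·ℤ of level-i lines. Then the Lebesgue measure of the set of shifts a ∈ [0, L) for which there exists some 0 ≤ i ≤ m putting p in the level-i moat is at most 2γ·(m+1)·L. Consequently, if a is chosen uniformly at random in [0, L), the probability that p is a γ-moat point (i.e., lies in the level-i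 moat for some 0 ≤ i ≤ m) is at most 2γ·(m+1). -/
/-!
For a single level with spacing `s = L / 2^i`, the admissible shifts form the `s`-periodic set
of `a` with `p` within `r = γ s` of `a + sℤ`. Being also `L`-periodic, it meets every window of
length `L` in the same measure, and in the window `(p - r, p - r + L]` it is covered by the
`2^i` intervals of length `2r` centred at `p, p + s, …, p + (2^i - 1) s`: since `r ≤ s / 2`,
no other grid offset reaches that window. This gives `2γL` per level; a union bound over the
`m + 1` levels finishes.
-/

open MeasureTheory Set

def nearGridShifts (p s r : ℝ) : Set ℝ := {a | ∃ j : ℤ, |p - (a + j * s)| < r}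

section nearGridShifts

variable {p s r : ℝ}

theorem nearGridShifts_eq_iUnion_ball :
    nearGridShifts p s r = ⋃ j : ℤ, Metric.ball (p - j * s) r := by
  ext a
  simp only [nearGridShifts, mem_ofPred_eq, mem_iUnion, Metric.mem_ball, Real.dist_eq]
  refine exists_congr fun j => ?_
  rw [← abs_neg]
  ring_nf

theorem measurableSet_nearGridShifts : MeasurableSet (nearGridShifts p s r) := by
  rw [nearGridShifts_eq_iUnion_ball]
  exact .iUnion fun _ => measurableSet_ball

theorem add_int_mul_mem_nearGridShifts_iff (a : ℝ) (k : ℤ) :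
    a + k * s ∈ nearGridShifts p s r ↔ a ∈ nearGridShifts p s r := by
  constructor
  · rintro ⟨j, hj⟩
    exact ⟨j + k, by push_cast; ring_nf at hj ⊢; exact hj⟩
  · rintro ⟨j, hj⟩
    exact ⟨j - k, by push_cast; ring_nf at hj ⊢; exact hj⟩

theorem preimage_vadd_nearGridShifts (N : ℕ) (g : AddSubgroup.zmultiples ((N : ℝ) * s)) :
    (g +ᵥ ·) ⁻¹' nearGridShifts p s r = nearGridShifts p s r := by
  obtain ⟨_, k, rfl⟩ := g
  ext a
  have hg : k • ((N : ℝ) * s) + a = a + ((k * N : ℤ) : ℝ) * s := by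
    push_cast
    rw [zsmul_eq_mul]
    ring
  simp only [mem_preimage, AddSubgroup.vadd_def, vadd_eq_add, hg,
    add_int_mul_mem_nearGridShifts_iff]

theorem nearGridShifts_inter_Ioc_subset (hs : 0 < s) (hr : r ≤ s / 2) (N : ℕ) :
    nearGridShifts p s r ∩ Ioc (p - r) (p - r + N * s) ⊆
      ⋃ k ∈ Finset.range N, Metric.ball (p + k * s) r := by
  rintro a ⟨⟨j, hj⟩, ha_lo, ha_hi⟩
  rw [abs_lt] at hj
  have hj_lt : j < 1 := by
    have : (j : ℝ) * s < 1 * s := by linarith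
    exact_mod_cast lt_of_mul_lt_mul_right this hs.le
  have hj_gt : -(N : ℤ) < j := by
    have : -(N : ℝ) * s < j * s := by linarith
    exact_mod_cast lt_of_mul_lt_mul_right this hs.le
  lift -j to ℕ using (by omega) with k hk
  refine mem_biUnion (x := k) (Finset.mem_range.2 (by omega)) ?_
  have hk' : (k : ℝ) = -j := by exact_mod_cast hk
  rw [Metric.mem_ball, Real.dist_eq, abs_lt, hk']
  constructor <;> linarith

theorem volume_nearGridShifts_inter_Ico_le (hs : 0 < s) (hr : r ≤ s / 2) (N : ℕ) :
    volume (nearGridShifts p s r ∩ Ico 0 (N * s)) ≤ ENNReal.ofReal (2 * r * N) := by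
  rcases N.eq_zero_or_pos with rfl | hN
  · simp
  have hT : 0 < (N : ℝ) * s := by positivity
  calc volume (nearGridShifts p s r ∩ Ico 0 (N * s))
      = volume (nearGridShifts p s r ∩ Ioc 0 (0 + N * s)) := by
        rw [zero_add]
        exact measure_congr ((Filter.EventuallyEq.refl _ _).inter Ico_ae_eq_Ioc)
    _ = volume (nearGridShifts p s r ∩ Ioc (p - r) (p - r + N * s)) :=
        (isAddFundamentalDomain_Ioc hT 0).measure_set_eq (isAddFundamentalDomain_Ioc hT _)
          measurableSet_nearGridShifts (preimage_vadd_nearGridShifts N)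
    _ ≤ volume (⋃ k ∈ Finset.range N, Metric.ball (p + k * s) r) :=
        measure_mono (nearGridShifts_inter_Ioc_subset hs hr N)
    _ ≤ ∑ k ∈ Finset.range N, volume (Metric.ball (p + k * s) r) :=
        measure_biUnion_finset_le _ _
    _ = ENNReal.ofReal (2 * r * N) := by
        simp only [Real.volume_ball, Finset.sum_const, Finset.card_range]
        rw [← ENNReal.ofReal_nsmul, nsmul_eq_mul, mul_comm]

end nearGridShifts

theorem stmt_7_general (L : ℝ) (hL : 0 < L) (m : ℕ) (γ : ℝ)
    (hγ : γ ≤ 1 / 2) (p : ℝ) :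
    volume {a : ℝ | a ∈ Set.Ico 0 L ∧
        ∃ i ≤ m, ∃ j : ℤ, |p - (a + (j : ℝ) * (L / 2 ^ i))| < γ * (L / 2 ^ i)} ≤
      ENNReal.ofReal (2 * γ * (m + 1) * L) := by
  have hlevel (i : ℕ) : volume (nearGridShifts p (L / 2 ^ i) (γ * (L / 2 ^ i)) ∩ Ico 0 L) ≤
      ENNReal.ofReal (2 * γ * L) := by
    have hs : 0 < L / 2 ^ i := by positivity
    have h := volume_nearGridShifts_inter_Ico_le (p := p) (r := γ * (L / 2 ^ i)) hs
      (by nlinarith) (2 ^ i)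
    have hperiod : ((2 ^ i : ℕ) : ℝ) * (L / 2 ^ i) = L := by push_cast; field_simp
    have hbound : 2 * (γ * (L / 2 ^ i)) * ((2 ^ i : ℕ) : ℝ) = 2 * γ * L := by
      push_cast; field_simp
    rwa [hperiod, hbound] at h
  calc _ ≤ volume (⋃ i ∈ Finset.range (m + 1),
          nearGridShifts p (L / 2 ^ i) (γ * (L / 2 ^ i)) ∩ Ico 0 L) := by
        refine measure_mono fun a ⟨ha, i, hi, hj⟩ => ?_
        exact mem_biUnion (Finset.mem_range.2 (Nat.lt_succ_of_le hi)) ⟨hj, ha⟩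
    _ ≤ ∑ i ∈ Finset.range (m + 1), ENNReal.ofReal (2 * γ * L) :=
        (measure_biUnion_finset_le _ _).trans (Finset.sum_le_sum fun i _ => hlevel i)
    _ = ENNReal.ofReal (2 * γ * (m + 1) * L) := by
        rw [Finset.sum_const, Finset.card_range, ← ENNReal.ofReal_nsmul, nsmul_eq_mul]
        push_cast
        ring_nf

/-- Moat-probability bound (one-dimensional): for a point `p`, the Lebesgue
measure of the set of shifts `a ∈ [0, L)` such that, for some level `i ≤ m`,
`p` is within distance `γ·L/2^i` of the shifted grid `a + (L/2^i)·ℤ` is at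
most `2γ·(m+1)·L`. Hence a uniformly random shift makes `p` a γ-moat point
with probability at most `2γ·(m+1)`. -/
theorem stmt_7 (L : ℝ) (hL : 0 < L) (m : ℕ) (γ : ℝ)
    (hγ0 : 0 ≤ γ) (hγ : γ ≤ 1 / 2) (p : ℝ) :
    volume {a : ℝ | a ∈ Set.Ico 0 L ∧
        ∃ i ≤ m, ∃ j : ℤ, |p - (a + (j : ℝ) * (L / 2 ^ i))| < γ * (L / 2 ^ i)} ≤
      ENNReal.ofReal (2 * γ * (m + 1) * L) :=
  stmt_7_general L hL m γ hγ p
end
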